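/- arXiv:2505.24825 — 2 statements merged into one kernel-verified Lean document; each statement's English description precedes it below -/
import Mathlib

section
/- Let 0 < ε < 1 be real and n ≥ 1 an integer, and let G'(n,ε) be the ladder graph. The subgraph H of G'(n,ε) consisting of all edges of G'(n,ε) except the edge (u_0, v_0) is a (1+ε)-spanner of G'(n,ε) of total weight (1+ε)·n, and H is inclusion-minimal: for every edge e of H, the subgraph H − e is not a (1+ε)-spanner of G'(n,ε). -/
open scoped BigOperators

namespace Paper

variable {V : Type*}

/-- The weight of a walk: the sum of its edge weights, with multiplicity. -/
noncomputable def wWalk (w : V → V → ℝ) {G : SimpleGraph V} {u v : V} (p : G.Walk u v) : ℝ :=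
  (p.darts.map fun d => w d.toProd.1 d.toProd.2).sum

/-- The distance between two vertices: the infimum of the weights of walks
between them, `⊤` if there is none. -/
noncomputable def gdist (G : SimpleGraph V) (w : V → V → ℝ) (u v : V) : EReal :=
  ⨅ p : G.Walk u v, (wWalk w p : EReal)

/-- `H` is a `t`-spanner of `G` with respect to the weights `w`. -/
def IsSpanner (G : SimpleGraph V) (w : V → V → ℝ) (H : SimpleGraph V) (t : ℝ) : Prop :=
  H ≤ G ∧ ∀ u v : V, gdist H w u v ≤ (t : EReal) * gdist G w u v

/-- The total weight of the edges of a graph. -/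
noncomputable def wGraph (G : SimpleGraph V) (w : V → V → ℝ)
    (hw : ∀ a b, w a b = w b a) : ℝ :=
  ∑ᶠ e ∈ G.edgeSet, Sym2.lift ⟨w, hw⟩ e

/-- Vertices of the ladder graph: `Sum.inl i` is `u_i`, `Sum.inr i` is `v_i`. -/
abbrev LV (n : ℕ) := Fin (n + 1) ⊕ Fin (n + 1)

/-- Base relation for the ladder graph `G'(n,ε)`: rungs `(u_i, v_i)` and
star edges `(u_0, u_j)`, `(v_0, v_j)`. -/
def ladderRel (n : ℕ) : LV n → LV n → Prop
  | Sum.inl i, Sum.inr j => i = j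
  | Sum.inl i, Sum.inl _ => i = 0
  | Sum.inr i, Sum.inr _ => i = 0
  | Sum.inr _, Sum.inl _ => False

/-- The ladder graph `G'(n,ε)`. -/
def ladder (n : ℕ) : SimpleGraph (LV n) := SimpleGraph.fromRel (ladderRel n)

/-- Edge weights of the ladder graph: rungs have weight `1`,
star edges have weight `ε/2`. -/
noncomputable def ladderW (n : ℕ) (ε : ℝ) : LV n → LV n → ℝ
  | Sum.inl _, Sum.inr _ => 1
  | Sum.inr _, Sum.inl _ => 1
  | _, _ => ε / 2

lemma ladderW_symm (n : ℕ) (ε : ℝ) : ∀ a b : LV n, ladderW n ε a b = ladderW n ε b a := by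
  rintro (a | a) (b | b) <;> rfl

/-- Base relation of the subgraph `H`: all edges of the ladder graph except `(u_0, v_0)`. -/
def minusRel (n : ℕ) : LV n → LV n → Prop
  | Sum.inl i, Sum.inr j => i = j ∧ i ≠ 0
  | Sum.inl i, Sum.inl _ => i = 0
  | Sum.inr i, Sum.inr _ => i = 0
  | Sum.inr _, Sum.inl _ => False

/-- The ladder graph minus the edge `(u_0, v_0)`. -/
def ladderMinus (n : ℕ) : SimpleGraph (LV n) := SimpleGraph.fromRel (minusRel n)


@[simp] lemma wWalk_nil {w : V → V → ℝ} {G : SimpleGraph V} {u : V} :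
    wWalk w (SimpleGraph.Walk.nil : G.Walk u u) = 0 := rfl

@[simp] lemma wWalk_cons {w : V → V → ℝ} {G : SimpleGraph V} {u x v : V}
    (h : G.Adj u x) (p : G.Walk x v) :
    wWalk w (SimpleGraph.Walk.cons h p) = w u x + wWalk w p := by
  simp [wWalk]

lemma gdist_le_of_walk {G : SimpleGraph V} {w : V → V → ℝ} {u v : V}
    (p : G.Walk u v) {c : ℝ} (hc : wWalk w p ≤ c) : gdist G w u v ≤ (c : EReal) :=
  le_trans (iInf_le _ p) (by exact_mod_cast hc)

lemma le_gdist_of_potential {G : SimpleGraph V} {w : V → V → ℝ} (φ : V → ℝ)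
    (hφ : ∀ a b, G.Adj a b → φ a - φ b ≤ w a b) (u v : V) :
    ((φ u - φ v : ℝ) : EReal) ≤ gdist G w u v := by
  refine le_iInf fun p => ?_
  rw [EReal.coe_le_coe_iff]
  induction p with
  | nil => simp
  | @cons a x b h q ih =>
    have := hφ a x h
    rw [wWalk_cons]
    linarith

lemma le_gdist_of_potential' {G : SimpleGraph V} {w : V → V → ℝ} (φ : V → ℝ)
    (hφ : ∀ a b, G.Adj a b → φ a - φ b ≤ w a b) (u v : V) {c : ℝ} (hc : c ≤ φ u - φ v) :
    (c : EReal) ≤ gdist G w u v :=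
  le_trans (by exact_mod_cast hc) (le_gdist_of_potential φ hφ u v)

lemma ladder_adj {n : ℕ} {a b : LV n} :
    (ladder n).Adj a b ↔ a ≠ b ∧ (ladderRel n a b ∨ ladderRel n b a) :=
  SimpleGraph.fromRel_adj _ _ _
lemma minus_adj {n : ℕ} {a b : LV n} :
    (ladderMinus n).Adj a b ↔ a ≠ b ∧ (minusRel n a b ∨ minusRel n b a) :=
  SimpleGraph.fromRel_adj _ _ _
lemma minus_le_ladder (n : ℕ) : ladderMinus n ≤ ladder n := by
  rintro (a|a) (b|b) ⟨hne, h|h⟩ <;>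
    refine ⟨hne, ?_⟩ <;> simp only [minusRel] at h <;>
    first
      | exact Or.inl h
      | exact Or.inr h
      | exact Or.inl h.1
      | exact Or.inr h.1
lemma adjM_star_u {n : ℕ} {j : Fin (n+1)} (hj : j ≠ 0) :
    (ladderMinus n).Adj (Sum.inl 0) (Sum.inl j) :=
  minus_adj.2 ⟨by simpa using (Ne.symm hj), Or.inl rfl⟩
lemma adjM_star_v {n : ℕ} {j : Fin (n+1)} (hj : j ≠ 0) :
    (ladderMinus n).Adj (Sum.inr 0) (Sum.inr j) :=
  minus_adj.2 ⟨by simpa using (Ne.symm hj), Or.inl rfl⟩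
lemma adjM_rung {n : ℕ} {i : Fin (n+1)} (hi : i ≠ 0) :
    (ladderMinus n).Adj (Sum.inl i) (Sum.inr i) :=
  minus_adj.2 ⟨by simp, Or.inl ⟨rfl, hi⟩⟩
lemma adjG_rung {n : ℕ} (i : Fin (n+1)) :
    (ladder n).Adj (Sum.inl i) (Sum.inr i) :=
  ladder_adj.2 ⟨by simp, Or.inl rfl⟩
lemma adjG_star_u {n : ℕ} {j : Fin (n+1)} (hj : j ≠ 0) :
    (ladder n).Adj (Sum.inl 0) (Sum.inl j) :=
  ladder_adj.2 ⟨by simpa using (Ne.symm hj), Or.inl rfl⟩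

lemma pot_check_uu {n : ℕ} {ε : ℝ} (hε0 : 0 < ε) (hε1 : ε < 1) {i j : Fin (n+1)}
    (hi : i ≠ 0) (hj : j ≠ 0) :
    ∀ a b : LV n, (ladder n).Adj a b →
      (fun x => if x = Sum.inl i then ε/2 else if x = Sum.inl j then -(ε/2) else 0) a
      - (fun x => if x = Sum.inl i then ε/2 else if x = Sum.inl j then -(ε/2) else 0) b
      ≤ ladderW n ε a b := by
  rintro (a|a) (b|b) hab <;> rw [ladder_adj] at hab <;> obtain ⟨hne, h⟩ := hab <;>
    simp only [ladderRel] at h <;> simp only [ladderW] <;> split_ifs <;>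
    first | linarith | (exfalso; simp_all) | simp_all

lemma pot_check_vv {n : ℕ} {ε : ℝ} (hε0 : 0 < ε) (hε1 : ε < 1) {i j : Fin (n+1)}
    (hi : i ≠ 0) (hj : j ≠ 0) :
    ∀ a b : LV n, (ladder n).Adj a b →
      (fun x => if x = Sum.inr i then ε/2 else if x = Sum.inr j then -(ε/2) else 0) a
      - (fun x => if x = Sum.inr i then ε/2 else if x = Sum.inr j then -(ε/2) else 0) b
      ≤ ladderW n ε a b := by
  rintro (a|a) (b|b) hab <;> rw [ladder_adj] at hab <;> obtain ⟨hne, h⟩ := hab <;>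
    simp only [ladderRel] at h <;> simp only [ladderW] <;> split_ifs <;>
    first | linarith | (exfalso; simp_all) | simp_all

lemma spanner_pair {G H : SimpleGraph V} {w : V → V → ℝ} {u v : V} {t D L : ℝ}
    (hH : gdist H w u v ≤ (D : EReal)) (hG : ((L:ℝ) : EReal) ≤ gdist G w u v)
    (ht : 0 ≤ t) (h : D ≤ t * L) :
    gdist H w u v ≤ (t : EReal) * gdist G w u v := by
  calc gdist H w u v ≤ (D : EReal) := hH
    _ ≤ ((t*L : ℝ) : EReal) := by exact_mod_cast h
    _ = (t:EReal) * (L:EReal) := by exact_mod_cast EReal.coe_mul t L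
    _ ≤ (t : EReal) * gdist G w u v := mul_le_mul_of_nonneg_left hG (by exact_mod_cast ht)

set_option maxHeartbeats 1000000 in
open SimpleGraph.Walk in
lemma spanner_part (n : ℕ) (hn : 1 ≤ n) (ε : ℝ) (hε0 : 0 < ε) (hε1 : ε < 1) :
    IsSpanner (ladder n) (ladderW n ε) (ladderMinus n) (1 + ε) := by
  have h1 : (1 : Fin (n+1)) ≠ 0 := by
    intro h
    have := congrArg Fin.val h
    simp [Fin.val_one', Nat.mod_eq_of_lt (by omega : 1 < n+1)] at this
  have ht : (0:ℝ) ≤ 1 + ε := by linarith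
  refine ⟨minus_le_ladder n, ?_⟩
  have cross_lb : ∀ (u v : LV n), u.isLeft → v.isRight →
      ((1 : ℝ) : EReal) ≤ gdist (ladder n) (ladderW n ε) u v := by
    intro u v hu hv
    refine le_gdist_of_potential' (Sum.elim (fun _ => 1) (fun _ => 0)) ?_ _ _ ?_
    · rintro (a|a) (b|b) hab <;> simp [ladderW] <;> linarith
    · rcases u with u | u <;> rcases v with v | v <;> simp_all
  have cross_lb' : ∀ (u v : LV n), u.isRight → v.isLeft →
      ((1 : ℝ) : EReal) ≤ gdist (ladder n) (ladderW n ε) u v := by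
    intro u v hu hv
    refine le_gdist_of_potential' (Sum.elim (fun _ => 0) (fun _ => 1)) ?_ _ _ ?_
    · rintro (a|a) (b|b) hab <;> simp [ladderW] <;> linarith
    · rcases u with u | u <;> rcases v with v | v <;> simp_all
  have trivial_case : ∀ u : LV n,
      gdist (ladderMinus n) (ladderW n ε) u u ≤ ((1+ε) : EReal) * gdist (ladder n) (ladderW n ε) u u := by
    intro u
    have h0 : gdist (ladderMinus n) (ladderW n ε) u u ≤ ((0:ℝ) : EReal) :=
      gdist_le_of_walk nil (by simp)
    have h0' : ((0:ℝ) : EReal) ≤ gdist (ladder n) (ladderW n ε) u u :=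
      le_gdist_of_potential' (fun _ => 0) (by rintro (a|a) (b|b) _ <;> simp [ladderW] <;> linarith) _ _ (by simp)
    refine le_trans h0 ?_
    have : ((0:ℝ):EReal) ≤ ((1+ε) : EReal) * gdist (ladder n) (ladderW n ε) u u := by
      refine mul_nonneg ?_ (le_trans (by norm_num) h0')
      exact_mod_cast ht
    exact_mod_cast this
  -- upper bound for cross pairs in ladderMinus
  have cross_ub : ∀ (i j : Fin (n+1)),
      gdist (ladderMinus n) (ladderW n ε) (Sum.inl i) (Sum.inr j) ≤ ((1+ε : ℝ) : EReal) := by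
    intro i j
    by_cases hij : i = j
    · subst hij
      by_cases hi : i = 0
      · subst hi
        refine gdist_le_of_walk
          (cons (adjM_star_u h1) (cons (adjM_rung h1) (cons (adjM_star_v h1).symm nil))) ?_
        simp [ladderW]; ring_nf; linarith
      · exact gdist_le_of_walk (cons (adjM_rung hi) nil) (by simp [ladderW]; linarith)
    · by_cases hj : j = 0
      · subst hj
        have hi : i ≠ 0 := hij
        refine gdist_le_of_walk (cons (adjM_rung hi) (cons (adjM_star_v hi).symm nil)) ?_
        simp [ladderW]; linarith
      · by_cases hi : i = 0
        · subst hi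
          refine gdist_le_of_walk (cons (adjM_star_u hj) (cons (adjM_rung hj) nil)) ?_
          simp [ladderW]; linarith
        · refine gdist_le_of_walk
            (cons (adjM_star_u hi).symm (cons (adjM_star_u hj) (cons (adjM_rung hj) nil))) ?_
          simp [ladderW]; linarith
  have cross_ub' : ∀ (i j : Fin (n+1)),
      gdist (ladderMinus n) (ladderW n ε) (Sum.inr i) (Sum.inl j) ≤ ((1+ε : ℝ) : EReal) := by
    intro i j
    by_cases hij : i = j
    · subst hij
      by_cases hi : i = 0
      · subst hi
        refine gdist_le_of_walk
          (cons (adjM_star_v h1) (cons (adjM_rung h1).symm (cons (adjM_star_u h1).symm nil))) ?_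
        simp [ladderW]; ring_nf; linarith
      · exact gdist_le_of_walk (cons (adjM_rung hi).symm nil) (by simp [ladderW]; linarith)
    · by_cases hi : i = 0
      · subst hi
        have hj : j ≠ 0 := fun h => hij h.symm
        refine gdist_le_of_walk (cons (adjM_star_v hj) (cons (adjM_rung hj).symm nil)) ?_
        simp [ladderW]; linarith
      · by_cases hj : j = 0
        · subst hj
          refine gdist_le_of_walk (cons (adjM_rung hi).symm (cons (adjM_star_u hi).symm nil)) ?_
          simp [ladderW]; linarith
        · refine gdist_le_of_walk
            (cons (adjM_star_v hi).symm (cons (adjM_star_v hj) (cons (adjM_rung hj).symm nil))) ?_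
          simp [ladderW]; linarith
  rintro (i|i) (j|j)
  · by_cases hij : i = j
    · subst hij; exact trivial_case _
    · have h0j : ∀ k : Fin (n+1), k ≠ 0 → (Sum.inl 0 : LV n) ≠ Sum.inl k := by
        intro k hk h; exact hk (Sum.inl.inj h).symm
      by_cases hi : i = 0
      · subst hi
        have hj : j ≠ 0 := fun h => hij h.symm
        refine spanner_pair (D := ε/2) (L := ε/2)
          (gdist_le_of_walk (cons (adjM_star_u hj) nil) (by simp [ladderW]))
          (le_gdist_of_potential' (fun x => if x = Sum.inl j then -(ε/2) else 0) ?_ _ _ ?_)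
          ht (by nlinarith)
        · rintro (a|a) (b|b) _ <;> simp only [ladderW] <;> split_ifs <;> linarith
        · simp [Ne.symm hj]
      · by_cases hj : j = 0
        · subst hj
          refine spanner_pair (D := ε/2) (L := ε/2)
            (gdist_le_of_walk (cons (adjM_star_u hi).symm nil) (by simp [ladderW]))
            (le_gdist_of_potential' (fun x => if x = Sum.inl i then ε/2 else 0) ?_ _ _ ?_)
            ht (by nlinarith)
          · rintro (a|a) (b|b) _ <;> simp only [ladderW] <;> split_ifs <;> linarith
          · simp [Ne.symm hi]
        · have hji : (Sum.inl j : LV n) ≠ Sum.inl i := by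
            intro h; exact hij (Sum.inl.inj h).symm
          refine spanner_pair (D := ε) (L := ε)
            (gdist_le_of_walk (cons (adjM_star_u hi).symm (cons (adjM_star_u hj) nil))
              (by simp [ladderW]; try linarith))
            (le_gdist_of_potential'
              (fun x => if x = Sum.inl i then ε/2 else if x = Sum.inl j then -(ε/2) else 0)
              (pot_check_uu hε0 hε1 hi hj) _ _ ?_) ht (by nlinarith)
          simp [hji]
  · exact spanner_pair (cross_ub i j) (cross_lb _ _ rfl rfl) ht (by nlinarith)
  · exact spanner_pair (cross_ub' i j) (cross_lb' _ _ rfl rfl) ht (by nlinarith)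
  · by_cases hij : i = j
    · subst hij; exact trivial_case _
    · have h0j : ∀ k : Fin (n+1), k ≠ 0 → (Sum.inr 0 : LV n) ≠ Sum.inr k := by
        intro k hk h; exact hk (Sum.inr.inj h).symm
      by_cases hi : i = 0
      · subst hi
        have hj : j ≠ 0 := fun h => hij h.symm
        refine spanner_pair (D := ε/2) (L := ε/2)
          (gdist_le_of_walk (cons (adjM_star_v hj) nil) (by simp [ladderW]))
          (le_gdist_of_potential' (fun x => if x = Sum.inr j then -(ε/2) else 0) ?_ _ _ ?_)
          ht (by nlinarith)
        · rintro (a|a) (b|b) _ <;> simp only [ladderW] <;> split_ifs <;> linarith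
        · simp [Ne.symm hj]
      · by_cases hj : j = 0
        · subst hj
          refine spanner_pair (D := ε/2) (L := ε/2)
            (gdist_le_of_walk (cons (adjM_star_v hi).symm nil) (by simp [ladderW]))
            (le_gdist_of_potential' (fun x => if x = Sum.inr i then ε/2 else 0) ?_ _ _ ?_)
            ht (by nlinarith)
          · rintro (a|a) (b|b) _ <;> simp only [ladderW] <;> split_ifs <;> linarith
          · simp [Ne.symm hi]
        · have hji : (Sum.inr j : LV n) ≠ Sum.inr i := by
            intro h; exact hij (Sum.inr.inj h).symm
          refine spanner_pair (D := ε) (L := ε)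
            (gdist_le_of_walk (cons (adjM_star_v hi).symm (cons (adjM_star_v hj) nil))
              (by simp [ladderW]; try linarith))
            (le_gdist_of_potential'
              (fun x => if x = Sum.inr i then ε/2 else if x = Sum.inr j then -(ε/2) else 0)
              (pot_check_vv hε0 hε1 hi hj) _ _ ?_) ht (by nlinarith)
          simp [hji]

lemma adjG_star_v {n : ℕ} {j : Fin (n+1)} (hj : j ≠ 0) :
    (ladder n).Adj (Sum.inr 0) (Sum.inr j) :=
  ladder_adj.2 ⟨by simpa using (Ne.symm hj), Or.inl rfl⟩

lemma not_spanner_aux {G H : SimpleGraph V} {w : V → V → ℝ} {u v : V} {t A B : ℝ}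
    (hH : ((A:ℝ):EReal) ≤ gdist H w u v) (hG : gdist G w u v ≤ (B:EReal))
    (ht : 0 ≤ t) (hAB : t * B < A) :
    ¬ (gdist H w u v ≤ (t:EReal) * gdist G w u v) := by
  intro h
  have : ((A:ℝ):EReal) ≤ ((t*B:ℝ):EReal) := by
    calc ((A:ℝ):EReal) ≤ gdist H w u v := hH
      _ ≤ (t:EReal) * gdist G w u v := h
      _ ≤ (t:EReal) * (B:EReal) := mul_le_mul_of_nonneg_left hG (by exact_mod_cast ht)
      _ = ((t*B:ℝ):EReal) := (EReal.coe_mul t B).symm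
  exact absurd (EReal.coe_le_coe_iff.1 this) (not_le.2 hAB)

open SimpleGraph.Walk in
lemma not_spanner_star_u {n : ℕ} {ε : ℝ} (hε0 : 0 < ε) (hε1 : ε < 1) {j : Fin (n+1)} (hj : j ≠ 0) :
    ¬ IsSpanner (ladder n) (ladderW n ε)
      ((ladderMinus n).deleteEdges {s(Sum.inl 0, Sum.inl j)}) (1+ε) := by
  rintro ⟨-, hsp⟩
  refine not_spanner_aux (A := 1) (B := ε/2) ?_
    (gdist_le_of_walk (cons (adjG_star_u hj) nil) (by simp [ladderW]))
    (by linarith) (by nlinarith) (hsp (Sum.inl 0) (Sum.inl j))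
  refine le_gdist_of_potential' (fun x => if x = Sum.inl j then -1 else 0) ?_ _ _ ?_
  · rintro (a|a) (b|b) hab <;> rw [SimpleGraph.deleteEdges_adj] at hab <;>
      obtain ⟨hab, hmem⟩ := hab <;> rw [minus_adj] at hab <;> obtain ⟨hne, h|h⟩ := hab <;>
      simp only [minusRel] at h <;> simp only [ladderW] <;> split_ifs <;>
      first | linarith | simp_all
  · simp [Ne.symm hj]

open SimpleGraph.Walk in
lemma not_spanner_star_v {n : ℕ} {ε : ℝ} (hε0 : 0 < ε) (hε1 : ε < 1) {j : Fin (n+1)} (hj : j ≠ 0) :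
    ¬ IsSpanner (ladder n) (ladderW n ε)
      ((ladderMinus n).deleteEdges {s(Sum.inr 0, Sum.inr j)}) (1+ε) := by
  rintro ⟨-, hsp⟩
  refine not_spanner_aux (A := 1) (B := ε/2) ?_
    (gdist_le_of_walk (cons (adjG_star_v hj) nil) (by simp [ladderW]))
    (by linarith) (by nlinarith) (hsp (Sum.inr 0) (Sum.inr j))
  refine le_gdist_of_potential' (fun x => if x = Sum.inr j then -1 else 0) ?_ _ _ ?_
  · rintro (a|a) (b|b) hab <;> rw [SimpleGraph.deleteEdges_adj] at hab <;>
      obtain ⟨hab, hmem⟩ := hab <;> rw [minus_adj] at hab <;> obtain ⟨hne, h|h⟩ := hab <;>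
      simp only [minusRel] at h <;> simp only [ladderW] <;> split_ifs <;>
      first | linarith | simp_all
  · simp [Ne.symm hj]

open SimpleGraph.Walk in
lemma not_spanner_rung {n : ℕ} {ε : ℝ} (hε0 : 0 < ε) (hε1 : ε < 1) {i : Fin (n+1)} (hi : i ≠ 0) :
    ¬ IsSpanner (ladder n) (ladderW n ε)
      ((ladderMinus n).deleteEdges {s(Sum.inl i, Sum.inr i)}) (1+ε) := by
  rintro ⟨-, hsp⟩
  refine not_spanner_aux (A := 1 + 2*ε) (B := 1) ?_
    (gdist_le_of_walk (cons (adjG_rung i) nil) (by simp [ladderW]))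
    (by linarith) (by nlinarith) (hsp (Sum.inl i) (Sum.inr i))
  refine le_gdist_of_potential'
    (Sum.elim (fun k => if k = i then 1+2*ε else if k = 0 then 1+3*ε/2 else 1+ε)
      (fun k => if k = i then 0 else if k = 0 then ε/2 else ε)) ?_ _ _ ?_
  · rintro (a|a) (b|b) hab <;> rw [SimpleGraph.deleteEdges_adj] at hab <;>
      obtain ⟨hab, hmem⟩ := hab <;> rw [minus_adj] at hab <;> obtain ⟨hne, h|h⟩ := hab <;>
      simp only [minusRel] at h <;> simp only [ladderW, Sum.elim_inl, Sum.elim_inr] <;>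
      split_ifs <;> first | linarith | simp_all
  · simp

def edgeMap (n : ℕ) : (Fin n ⊕ Fin n ⊕ Fin n) → Sym2 (LV n)
  | Sum.inl j => s(Sum.inl 0, Sum.inl j.succ)
  | Sum.inr (Sum.inl j) => s(Sum.inr 0, Sum.inr j.succ)
  | Sum.inr (Sum.inr j) => s(Sum.inl j.succ, Sum.inr j.succ)

lemma edgeMap_inj (n : ℕ) : Function.Injective (edgeMap n) := by
  rintro (j|j|j) (k|k|k) h <;>
    simp only [edgeMap, Sym2.eq_iff, Sum.inl.injEq, Sum.inr.injEq] at h <;>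
    first
      | (rcases h with ⟨-, h⟩ | ⟨h, -⟩
         · exact congrArg _ (Fin.succ_injective _ h)
         · exact absurd h.symm (Fin.succ_ne_zero _))
      | simp_all [Fin.succ_ne_zero]

lemma edgeSet_eq (n : ℕ) :
    (ladderMinus n).edgeSet = ↑(Finset.image (edgeMap n) Finset.univ) := by
  ext e
  induction e with
  | _ a b =>
    simp only [SimpleGraph.mem_edgeSet, Finset.coe_image, Finset.coe_univ, Set.image_univ,
      Set.mem_range]
    constructor
    · intro hab
      rcases a with a|a <;> rcases b with b|b <;> rw [minus_adj] at hab <;>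
        obtain ⟨hne, h|h⟩ := hab <;> simp only [minusRel] at h
      · subst h
        have hb : b ≠ 0 := fun hb => hne (by rw [hb])
        exact ⟨Sum.inl (b.pred hb), by simp [edgeMap, Fin.succ_pred]⟩
      · subst h
        have ha : a ≠ 0 := fun ha => hne (by rw [ha])
        exact ⟨Sum.inl (a.pred ha), by simp [edgeMap, Fin.succ_pred, Sym2.eq_swap]⟩
      · obtain ⟨rfl, ha⟩ := h
        exact ⟨Sum.inr (Sum.inr (a.pred ha)), by simp [edgeMap, Fin.succ_pred]⟩
      · obtain ⟨rfl, hb⟩ := h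
        exact ⟨Sum.inr (Sum.inr (b.pred hb)), by simp [edgeMap, Fin.succ_pred, Sym2.eq_swap]⟩
      · subst h
        have hb : b ≠ 0 := fun hb => hne (by rw [hb])
        exact ⟨Sum.inr (Sum.inl (b.pred hb)), by simp [edgeMap, Fin.succ_pred]⟩
      · subst h
        have ha : a ≠ 0 := fun ha => hne (by rw [ha])
        exact ⟨Sum.inr (Sum.inl (a.pred ha)), by simp [edgeMap, Fin.succ_pred, Sym2.eq_swap]⟩
    · rintro ⟨(j|j|j), h⟩ <;> rw [← SimpleGraph.mem_edgeSet, ← h]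
      · exact ((ladderMinus n).mem_edgeSet).2 (adjM_star_u (Fin.succ_ne_zero j))
      · exact ((ladderMinus n).mem_edgeSet).2 (adjM_star_v (Fin.succ_ne_zero j))
      · exact ((ladderMinus n).mem_edgeSet).2 (adjM_rung (Fin.succ_ne_zero j))

lemma weight_part (n : ℕ) (ε : ℝ) :
    wGraph (ladderMinus n) (ladderW n ε) (ladderW_symm n ε) = (1 + ε) * n := by
  rw [wGraph, edgeSet_eq, finsum_mem_coe_finset,
    Finset.sum_image (fun x _ y _ h => edgeMap_inj n h), Fintype.sum_sum_type,
    Fintype.sum_sum_type]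
  simp only [edgeMap, Sym2.lift_mk, ladderW]
  simp [Finset.sum_const, Finset.card_univ, mul_comm]
  ring
/-- the ladder graph minus the edge `(u_0, v_0)` is a `(1+ε)`-spanner of the
ladder graph of total weight `(1+ε)·n`, and it is inclusion-minimal: deleting any of its
edges destroys the `(1+ε)`-spanner property. -/
theorem statement1 (n : ℕ) (hn : 1 ≤ n) (ε : ℝ) (hε0 : 0 < ε) (hε1 : ε < 1) :
    IsSpanner (ladder n) (ladderW n ε) (ladderMinus n) (1 + ε) ∧
    wGraph (ladderMinus n) (ladderW n ε) (ladderW_symm n ε) = (1 + ε) * n ∧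
    ∀ e ∈ (ladderMinus n).edgeSet,
      ¬ IsSpanner (ladder n) (ladderW n ε) ((ladderMinus n).deleteEdges {e}) (1 + ε) := by
  refine ⟨spanner_part n hn ε hε0 hε1, weight_part n ε, ?_⟩
  intro e he
  induction e with
  | _ a b =>
    rw [SimpleGraph.mem_edgeSet] at he
    rcases a with a|a <;> rcases b with b|b <;> rw [minus_adj] at he <;>
      obtain ⟨hne, h|h⟩ := he <;> simp only [minusRel] at h
    · subst h
      have hb : b ≠ 0 := fun hb => hne (by rw [hb])
      exact not_spanner_star_u hε0 hε1 hb
    · subst h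
      have ha : a ≠ 0 := fun ha => hne (by rw [ha])
      rw [Sym2.eq_swap]
      exact not_spanner_star_u hε0 hε1 ha
    · obtain ⟨rfl, ha⟩ := h
      exact not_spanner_rung hε0 hε1 ha
    · obtain ⟨rfl, hb⟩ := h
      rw [Sym2.eq_swap]
      exact not_spanner_rung hε0 hε1 hb
    · subst h
      have hb : b ≠ 0 := fun hb => hne (by rw [hb])
      exact not_spanner_star_v hε0 hε1 hb
    · subst h
      have ha : a ≠ 0 := fun ha => hne (by rw [ha])
      rw [Sym2.eq_swap]
      exact not_spanner_star_v hε0 hε1 ha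

end Paper
end

section
/- Let G = (V, E, w) be an edge-weighted graph, let ε be a real with 0 < ε ≤ 1/100, and set κ = 1/(3(1+ε)). Let ρ be a walk in G, and let (a,b) be an edge of G that is κ-hanging at (p, q) on ρ and also κ-hanging at (p', q') on ρ. Then dist_G(p, q') < (5/2)·w(a,b). -/
open scoped BigOperators

namespace Paper

variable {V : Type*}

/-- The edge `(a,b)` is `κ`-hanging at `(p,q)` on the walk `ρ`: there is a subwalk
`σ` of `ρ` from `p` to `q` with `w(σ) ≥ κ·w(a,b)` and
`dist_G(a,p) + w(σ) + dist_G(q,b) ≤ (1+ε)·w(a,b)`. -/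
def HangingAt (G : SimpleGraph V) (w : V → V → ℝ) (ε κ : ℝ)
    {s t : V} (ρ : G.Walk s t) (a b p q : V) : Prop :=
  ∃ (σ : G.Walk p q) (ρ₁ : G.Walk s p) (ρ₃ : G.Walk q t),
    ρ = ρ₁.append (σ.append ρ₃) ∧
    κ * w a b ≤ wWalk w σ ∧
    gdist G w a p + (wWalk w σ : EReal) + gdist G w q b ≤ (((1 + ε) * w a b : ℝ) : EReal)


lemma wWalk_nonneg {G : SimpleGraph V} (w : V → V → ℝ)
    (hpos : ∀ u v : V, G.Adj u v → 0 < w u v) {u v : V} (p : G.Walk u v) :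
    0 ≤ wWalk w p := by
  apply List.sum_nonneg
  intro x hx
  simp only [List.mem_map] at hx
  obtain ⟨d, hd, rfl⟩ := hx
  exact (hpos _ _ d.adj).le

lemma gdist_nonneg {G : SimpleGraph V} (w : V → V → ℝ)
    (hpos : ∀ u v : V, G.Adj u v → 0 < w u v) (u v : V) :
    (0 : EReal) ≤ gdist G w u v :=
  le_iInf fun p => by exact_mod_cast wWalk_nonneg w hpos p

lemma wWalk_append {G : SimpleGraph V} (w : V → V → ℝ) {u v x : V}
    (p : G.Walk u v) (q : G.Walk v x) :
    wWalk w (p.append q) = wWalk w p + wWalk w q := by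
  simp [wWalk, SimpleGraph.Walk.darts_append]

lemma wWalk_reverse {G : SimpleGraph V} (w : V → V → ℝ) (hw : ∀ a b, w a b = w b a)
    {u v : V} (p : G.Walk u v) :
    wWalk w p.reverse = wWalk w p := by
  simp only [wWalk, SimpleGraph.Walk.darts_reverse, List.map_reverse, List.sum_reverse,
    List.map_map]
  congr 1
  apply List.map_congr_left
  intro d _
  simp [SimpleGraph.Dart.symm, hw]

lemma hang_extract {G : SimpleGraph V} (w : V → V → ℝ)
    (hpos : ∀ u v : V, G.Adj u v → 0 < w u v) {a p q b : V} {σw C : ℝ}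
    (hs : 0 ≤ σw)
    (hineq : gdist G w a p + (σw : EReal) + gdist G w q b ≤ ((C : ℝ) : EReal)) :
    ∃ r1 r2 : ℝ, gdist G w a p = (r1 : EReal) ∧ gdist G w q b = (r2 : EReal) ∧
      r1 + σw + r2 ≤ C ∧ 0 ≤ r1 ∧ 0 ≤ r2 := by
  set d1 := gdist G w a p with hd1def
  set d2 := gdist G w q b with hd2def
  have hd1 : (0 : EReal) ≤ d1 := gdist_nonneg w hpos a p
  have hd2 : (0 : EReal) ≤ d2 := gdist_nonneg w hpos q b
  have hσ : (0 : EReal) ≤ ((σw : ℝ) : EReal) := by exact_mod_cast hs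
  have h1le : d1 ≤ ((C : ℝ) : EReal) :=
    le_trans (le_trans (le_add_of_nonneg_right hσ) (le_add_of_nonneg_right hd2)) hineq
  have h2le : d2 ≤ ((C : ℝ) : EReal) := by
    refine le_trans ?_ hineq
    calc d2 = 0 + (0 : EReal) + d2 := by simp
    _ ≤ d1 + (σw : EReal) + d2 := by
        exact add_le_add (add_le_add hd1 hσ) le_rfl
  have h1t : d1 ≠ ⊤ := (h1le.trans_lt (EReal.coe_lt_top C)).ne
  have h2t : d2 ≠ ⊤ := (h2le.trans_lt (EReal.coe_lt_top C)).ne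
  have h1b : d1 ≠ ⊥ := by
    intro h; rw [h] at hd1; exact absurd hd1 (by simp)
  have h2b : d2 ≠ ⊥ := by
    intro h; rw [h] at hd2; exact absurd hd2 (by simp)
  refine ⟨d1.toReal, d2.toReal, (EReal.coe_toReal h1t h1b).symm,
    (EReal.coe_toReal h2t h2b).symm, ?_, ?_, ?_⟩
  · rw [← EReal.coe_toReal h1t h1b, ← EReal.coe_toReal h2t h2b] at hineq
    exact_mod_cast hineq
  · rw [← EReal.coe_toReal h1t h1b] at hd1; exact_mod_cast hd1
  · rw [← EReal.coe_toReal h2t h2b] at hd2; exact_mod_cast hd2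

/-- if an edge `(a,b)` is `κ`-hanging at `(p,q)` and at `(p',q')` on a walk
`ρ`, where `κ = 1/(3(1+ε))`, then `dist_G(p,q') < (5/2)·w(a,b)`. -/
theorem statement6 (G : SimpleGraph V) (w : V → V → ℝ)
    (hw : ∀ a b, w a b = w b a) (hpos : ∀ u v : V, G.Adj u v → 0 < w u v)
    (ε : ℝ) (hε0 : 0 < ε) (hε : ε ≤ 1/100)
    {s t : V} (ρ : G.Walk s t) (a b p q p' q' : V) (hab : G.Adj a b)
    (h1 : HangingAt G w ε (1 / (3 * (1 + ε))) ρ a b p q)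
    (h2 : HangingAt G w ε (1 / (3 * (1 + ε))) ρ a b p' q') :
    gdist G w p q' < (((5/2) * w a b : ℝ) : EReal) := by
  obtain ⟨σ1, -, -, -, hκ1, hineq1⟩ := h1
  obtain ⟨σ2, -, -, -, hκ2, hineq2⟩ := h2
  have hW : 0 < w a b := hpos a b hab
  obtain ⟨r1, r2, hd1, hd2, hsum1, hr1, hr2⟩ :=
    hang_extract w hpos (wWalk_nonneg w hpos σ1) hineq1
  obtain ⟨r3, r4, hd3, hd4, hsum2, hr3, hr4⟩ :=
    hang_extract w hpos (wWalk_nonneg w hpos σ2) hineq2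
  have hP : gdist G w a p < ((r1 + w a b / 50 : ℝ) : EReal) := by
    rw [hd1]
    exact_mod_cast (by linarith : r1 < r1 + w a b / 50)
  rw [gdist, iInf_lt_iff] at hP
  obtain ⟨P, hPlt⟩ := hP
  have hPw : wWalk w P < r1 + w a b / 50 := by exact_mod_cast hPlt
  have hQ : gdist G w q' b < ((r4 + w a b / 50 : ℝ) : EReal) := by
    rw [hd4]
    exact_mod_cast (by linarith : r4 < r4 + w a b / 50)
  rw [gdist, iInf_lt_iff] at hQ
  obtain ⟨Q, hQlt⟩ := hQ
  have hQw : wWalk w Q < r4 + w a b / 50 := by exact_mod_cast hQlt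
  let R : G.Walk p q' := P.reverse.append (hab.toWalk.append Q.reverse)
  have hR : gdist G w p q' ≤ ((wWalk w R : ℝ) : EReal) := iInf_le _ R
  refine lt_of_le_of_lt hR ?_
  rw [EReal.coe_lt_coe_iff]
  have hRw : wWalk w R = wWalk w P + (w a b + wWalk w Q) := by
    have ht : wWalk w hab.toWalk = w a b := by
      simp [wWalk, SimpleGraph.Adj.toWalk]
    simp only [R, wWalk_append, wWalk_reverse w hw, ht]
  rw [hRw]
  have h1ε : (0:ℝ) < 3 * (1 + ε) := by linarith
  have hkge : (100:ℝ)/303 ≤ 1 / (3 * (1 + ε)) := by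
    rw [div_le_div_iff₀ (by norm_num) h1ε]
    linarith
  have hkW : (100/303) * w a b ≤ (1 / (3 * (1 + ε))) * w a b :=
    mul_le_mul_of_nonneg_right hkge hW.le
  have hεW : ε * w a b ≤ (1/100) * w a b :=
    mul_le_mul_of_nonneg_right hε hW.le
  nlinarith [hκ1, hκ2, hsum1, hsum2]

end Paper
end
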